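/- If G₁ and G₂ are two strictly positive (F_t)-adapted processes on [0,T], each with all paths non-increasing and continuous, with G₁(0) = G₂(0) = 1, and such that both (c(t)G₁(t))_{t∈[0,T]} and (c(t)G₂(t))_{t∈[0,T]} are (F_t)-martingales under Q, then G₁ and G₂ are indistinguishable, i.e. Q-almost surely G₁(t) = G₂(t) for all t ∈ [0,T]. -/

import Mathlib

open MeasureTheory

/-- `X` is an `(F_t)_{t∈[0,T]}`-martingale under `Q`. -/
def MartingaleOn {Ω : Type*} [mΩ : MeasurableSpace Ω] (F : ℝ → MeasurableSpace Ω)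
    (Q : Measure Ω) (X : ℝ → Ω → ℝ) (T : ℝ) : Prop :=
  (∀ t ∈ Set.Icc (0 : ℝ) T, Measurable[F t] (X t) ∧ Integrable (X t) Q) ∧
  ∀ s t : ℝ, 0 ≤ s → s ≤ t → t ≤ T → Q[X t | F s] =ᵐ[Q] X s

/-!
Write `D = G₁ - G₂`. Then `c D` is a martingale, and `c` is a submartingale because `c G₁` is a
martingale while `G₁` is positive and non-increasing. For `s ≤ u`, expanding
`c_u (D_u - D_s)²` and using these two facts together with `c ≤ 1` gives
`E[c_u D_u²] ≤ E[c_s D_s²] + E[(D_u - D_s)²]`. Summing along uniform partitions of `[0, t]`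
bounds `E[c_t D_t²]` by the expected quadratic variation sums of `D`, which vanish in the limit
because the paths of `D` are continuous and of bounded variation. Hence `c_t D_t² = 0` a.s., so
`D_t = 0` a.s. as `c_t > 0`, and continuity of the paths gives indistinguishability.
-/

open Filter Set Topology
open scoped ENNReal

noncomputable def gridPoint (t : ℝ) (n k : ℕ) : ℝ := k * t / n

noncomputable def quadVarSum (g : ℝ → ℝ) (t : ℝ) (n : ℕ) : ℝ :=
  ∑ k ∈ Finset.range n, (g (gridPoint t n (k + 1)) - g (gridPoint t n k)) ^ 2

noncomputable def gridVariation (g : ℝ → ℝ) (t : ℝ) (n : ℕ) : ℝ :=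
  ∑ k ∈ Finset.range n, |g (gridPoint t n (k + 1)) - g (gridPoint t n k)|

section Grid

variable {t : ℝ} {n k : ℕ}

@[simp] lemma gridPoint_zero : gridPoint t n 0 = 0 := by simp [gridPoint]

lemma gridPoint_self (hn : n ≠ 0) : gridPoint t n n = t := by
  simp [gridPoint, hn]

lemma gridPoint_succ_sub : gridPoint t n (k + 1) - gridPoint t n k = t / n := by
  simp only [gridPoint]; push_cast; ring

lemma monotone_gridPoint (ht : 0 ≤ t) : Monotone (gridPoint t n) := by
  intro i j hij
  unfold gridPoint
  gcongr

lemma gridPoint_mem_Icc (ht : 0 ≤ t) (hk : k ≤ n) : gridPoint t n k ∈ Icc 0 t := by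
  rcases eq_or_ne n 0 with rfl | hn
  · simp [Nat.le_zero.1 hk, ht]
  · refine ⟨?_, ?_⟩
    · simpa using monotone_gridPoint ht (Nat.zero_le k)
    · simpa [gridPoint_self hn] using monotone_gridPoint (n := n) ht hk

end Grid

section QuadraticVariation

variable {g : ℝ → ℝ} {t V : ℝ} {n : ℕ}

lemma quadVarSum_nonneg : 0 ≤ quadVarSum g t n :=
  Finset.sum_nonneg fun _ _ => sq_nonneg _

lemma gridVariation_nonneg : 0 ≤ gridVariation g t n :=
  Finset.sum_nonneg fun _ _ => abs_nonneg _

lemma quadVarSum_le_mul_gridVariation {ε : ℝ}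
    (hε : ∀ k < n, |g (gridPoint t n (k + 1)) - g (gridPoint t n k)| ≤ ε) :
    quadVarSum g t n ≤ ε * gridVariation g t n := by
  rw [gridVariation, Finset.mul_sum]
  refine Finset.sum_le_sum fun k hk => ?_
  rw [← sq_abs, sq]
  exact mul_le_mul_of_nonneg_right (hε k (Finset.mem_range.1 hk)) (abs_nonneg _)

lemma quadVarSum_le_sq_of_gridVariation_le (hV : gridVariation g t n ≤ V) :
    quadVarSum g t n ≤ V ^ 2 :=
  calc quadVarSum g t n ≤ gridVariation g t n * gridVariation g t n :=
        quadVarSum_le_mul_gridVariation fun k hk =>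
          Finset.single_le_sum (f := fun k => |g (gridPoint t n (k + 1)) - g (gridPoint t n k)|)
            (fun _ _ => abs_nonneg _) (Finset.mem_range.2 hk)
    _ ≤ V ^ 2 := by
        rw [sq]; exact mul_le_mul hV hV gridVariation_nonneg (gridVariation_nonneg.trans hV)

lemma tendsto_quadVarSum_of_continuousOn (ht : 0 ≤ t) (hg : ContinuousOn g (Icc 0 t))
    (hV : ∀ n, gridVariation g t n ≤ V) : Tendsto (quadVarSum g t) atTop (𝓝 0) := by
  have hV0 : 0 ≤ V := gridVariation_nonneg.trans (hV 0)
  refine tendsto_order.2 ⟨fun a ha => Eventually.of_forall fun n => ha.trans_le quadVarSum_nonneg,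
    fun a ha => ?_⟩
  obtain ⟨δ, hδ, hgδ⟩ := Metric.uniformContinuousOn_iff.1
    (isCompact_Icc.uniformContinuousOn_of_continuous hg) (a / (V + 1)) (by positivity)
  filter_upwards [(tendsto_const_div_atTop_nhds_zero_nat t).eventually (gt_mem_nhds hδ)]
    with n hn
  have hstep : ∀ k < n, |g (gridPoint t n (k + 1)) - g (gridPoint t n k)| ≤ a / (V + 1) :=
    fun k hk => (hgδ _ (gridPoint_mem_Icc ht hk) _ (gridPoint_mem_Icc ht hk.le)
      (by rwa [Real.dist_eq, gridPoint_succ_sub, abs_of_nonneg (by positivity)])).le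
  calc quadVarSum g t n ≤ a / (V + 1) * gridVariation g t n := quadVarSum_le_mul_gridVariation hstep
    _ ≤ a / (V + 1) * V := by gcongr; exact hV n
    _ < a := by rw [div_mul_eq_mul_div, div_lt_iff₀ (by linarith)]; nlinarith

lemma gridVariation_sub_le_of_antitoneOn {f h : ℝ → ℝ} (ht : 0 ≤ t)
    (hf : AntitoneOn f (Icc 0 t)) (hh : AntitoneOn h (Icc 0 t)) (n : ℕ) :
    gridVariation (f - h) t n ≤ (f 0 - f t) + (h 0 - h t) := by
  have h0 : (0 : ℝ) ∈ Icc 0 t := ⟨le_rfl, ht⟩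
  have ht' : t ∈ Icc 0 t := ⟨ht, le_rfl⟩
  rcases eq_or_ne n 0 with rfl | hn
  · simp only [gridVariation, Finset.range_zero, Finset.sum_empty]
    linarith [hf h0 ht' ht, hh h0 ht' ht]
  set p := gridPoint t n
  calc gridVariation (f - h) t n
      ≤ ∑ k ∈ Finset.range n, ((f (p k) - f (p (k + 1))) + (h (p k) - h (p (k + 1)))) := by
        refine Finset.sum_le_sum fun k hk => ?_
        have hk := Finset.mem_range.1 hk
        have hpk := gridPoint_mem_Icc ht hk.le
        have hpk1 := gridPoint_mem_Icc ht hk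
        have hp := monotone_gridPoint (n := n) ht k.le_succ
        have := hf hpk hpk1 hp
        have := hh hpk hpk1 hp
        rw [abs_le]; constructor <;> simp only [Pi.sub_apply] <;> linarith
    _ = (f 0 - f t) + (h 0 - h t) := by
        rw [Finset.sum_add_distrib, Finset.sum_range_sub' (fun k => f (p k)),
          Finset.sum_range_sub' (fun k => h (p k))]
        simp [p, gridPoint_self hn]

end QuadraticVariation

section Probability

variable {Ω : Type*} {m mΩ : MeasurableSpace Ω} {μ : Measure Ω}

lemma memLp_top_sq {f : Ω → ℝ} (hf : MemLp f ∞ μ) : MemLp (fun ω => f ω ^ 2) ∞ μ := by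
  convert hf.mul (r := ∞) hf using 1
  exact funext fun ω => sq (f ω)

lemma integral_mul_condExp_of_stronglyMeasurable (hm : m ≤ mΩ)
    [SigmaFinite (μ.trim hm)] {f g : Ω → ℝ} (hf : StronglyMeasurable[m] f)
    (hfg : Integrable (f * g) μ) (hg : Integrable g μ) :
    ∫ ω, f ω * g ω ∂μ = ∫ ω, f ω * μ[g | m] ω ∂μ :=
  (integral_condExp hm).symm.trans
    (integral_congr_ae (condExp_mul_of_stronglyMeasurable_left hf hfg hg))

lemma ae_le_condExp_of_condExp_mul_eq {a b g h : Ω → ℝ}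
    (hg : StronglyMeasurable[m] g) (hg_pos : ∀ ω, 0 < g ω) (hb : ∀ ω, 0 ≤ b ω)
    (hhg : ∀ ω, h ω ≤ g ω) (hbh : Integrable (b * h) μ) (hgb : Integrable (g * b) μ)
    (hb_int : Integrable b μ) (heq : μ[b * h | m] =ᵐ[μ] a * g) : a ≤ᵐ[μ] μ[b | m] := by
  have hmono : μ[b * h | m] ≤ᵐ[μ] μ[g * b | m] :=
    condExp_mono hbh hgb (ae_of_all _ fun ω => by
      simpa only [Pi.mul_apply, mul_comm (g ω)] using mul_le_mul_of_nonneg_left (hhg ω) (hb ω))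
  filter_upwards [heq, hmono, condExp_mul_of_stronglyMeasurable_left hg hgb hb_int]
    with ω h_eq h_mono h_pull
  rw [h_eq, h_pull] at h_mono
  exact le_of_mul_le_mul_right (by simpa only [Pi.mul_apply, mul_comm (g ω)] using h_mono)
    (hg_pos ω)

lemma ae_forall_eq_of_continuousOn {ι E : Type*} [TopologicalSpace ι] [SecondCountableTopology ι]
    [TopologicalSpace E] [T2Space E] {X Y : ι → Ω → E} {s : Set ι}
    (hX : ∀ ω, ContinuousOn (fun t => X t ω) s) (hY : ∀ ω, ContinuousOn (fun t => Y t ω) s)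
    (h : ∀ t ∈ s, X t =ᵐ[μ] Y t) : ∀ᵐ ω ∂μ, ∀ t ∈ s, X t ω = Y t ω := by
  obtain ⟨S, hS, hS_dense⟩ := TopologicalSpace.exists_countable_dense s
  have hae : ∀ᵐ ω ∂μ, ∀ t ∈ S, X t ω = Y t ω := (ae_ball_iff hS).2 fun t _ => h t t.2
  filter_upwards [hae] with ω hω t ht
  exact congrFun (Continuous.ext_on hS_dense (hX ω).domRestrict (hY ω).domRestrict hω) ⟨t, ht⟩

variable [IsFiniteMeasure μ]

lemma integrable_sq_sub {f g : Ω → ℝ} (hf : MemLp f ∞ μ) (hg : MemLp g ∞ μ) :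
    Integrable (fun ω => (f ω - g ω) ^ 2) μ :=
  (memLp_top_sq (hf.sub hg)).integrable le_top

lemma integral_mul_sq_le_add_integral_sq_sub (hm : m ≤ mΩ)
    {cs cu Ds Du : Ω → ℝ} (hDs_meas : StronglyMeasurable[m] Ds)
    (hcs : MemLp cs ∞ μ) (hcu : MemLp cu ∞ μ) (hDs : MemLp Ds ∞ μ) (hDu : MemLp Du ∞ μ)
    (hcu_le : ∀ᵐ ω ∂μ, cu ω ≤ 1) (hmart : μ[cu * Du | m] =ᵐ[μ] cs * Ds)
    (hsub : cs ≤ᵐ[μ] μ[cu | m]) :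
    ∫ ω, cu ω * Du ω ^ 2 ∂μ ≤ ∫ ω, cs ω * Ds ω ^ 2 ∂μ + ∫ ω, (Du ω - Ds ω) ^ 2 ∂μ := by
  have int : ∀ {f : Ω → ℝ}, MemLp f ∞ μ → Integrable f μ := fun hf => hf.integrable le_top
  have mul : ∀ {f g : Ω → ℝ}, MemLp f ∞ μ → MemLp g ∞ μ → MemLp (f * g) ∞ μ :=
    fun hf hg => hg.mul hf
  have hDs2 := memLp_top_sq hDs
  have hΔ2 := memLp_top_sq (hDu.sub hDs)
  have hcross : ∫ ω, Ds ω * (cu ω * Du ω) ∂μ = ∫ ω, cs ω * Ds ω ^ 2 ∂μ :=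
    calc ∫ ω, Ds ω * (cu ω * Du ω) ∂μ = ∫ ω, Ds ω * μ[cu * Du | m] ω ∂μ :=
          integral_mul_condExp_of_stronglyMeasurable hm hDs_meas
            (int (mul hDs (mul hcu hDu))) (int (mul hcu hDu))
      _ = ∫ ω, cs ω * Ds ω ^ 2 ∂μ := integral_congr_ae <| by
          filter_upwards [hmart] with ω h
          rw [h, Pi.mul_apply]; ring
  have hsubm : ∫ ω, cs ω * Ds ω ^ 2 ∂μ ≤ ∫ ω, Ds ω ^ 2 * cu ω ∂μ :=
    calc ∫ ω, cs ω * Ds ω ^ 2 ∂μ ≤ ∫ ω, Ds ω ^ 2 * μ[cu | m] ω ∂μ :=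
          integral_mono_ae (int (mul hcs hDs2)) (integrable_condExp.mul_of_top_right hDs2) <| by
            filter_upwards [hsub] with ω h
            rw [mul_comm]; exact mul_le_mul_of_nonneg_left h (sq_nonneg _)
      _ = ∫ ω, Ds ω ^ 2 * cu ω ∂μ :=
          (integral_mul_condExp_of_stronglyMeasurable hm (hDs_meas.pow 2)
            (int (mul hDs2 hcu)) (int hcu)).symm
  have hle : ∫ ω, cu ω * (Du ω - Ds ω) ^ 2 ∂μ ≤ ∫ ω, (Du ω - Ds ω) ^ 2 ∂μ :=
    integral_mono_ae (int (mul hcu hΔ2)) (int hΔ2) <| by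
      filter_upwards [hcu_le] with ω h
      exact mul_le_of_le_one_left (sq_nonneg _) h
  have hexpand : ∫ ω, cu ω * (Du ω - Ds ω) ^ 2 ∂μ = ∫ ω, cu ω * Du ω ^ 2 ∂μ
      - 2 * ∫ ω, Ds ω * (cu ω * Du ω) ∂μ + ∫ ω, Ds ω ^ 2 * cu ω ∂μ := by
    have hcuDu2 : Integrable (fun ω => cu ω * Du ω ^ 2) μ := int (mul hcu (memLp_top_sq hDu))
    have hcross_int : Integrable (fun ω => 2 * (Ds ω * (cu ω * Du ω))) μ :=
      (int (mul hDs (mul hcu hDu))).const_mul 2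
    have hDs2cu : Integrable (fun ω => Ds ω ^ 2 * cu ω) μ := int (mul hDs2 hcu)
    calc ∫ ω, cu ω * (Du ω - Ds ω) ^ 2 ∂μ
        = ∫ ω, (cu ω * Du ω ^ 2 - 2 * (Ds ω * (cu ω * Du ω)) + Ds ω ^ 2 * cu ω) ∂μ :=
          integral_congr_ae (ae_of_all _ fun ω => by ring)
      _ = _ := by
          have hdiff : Integrable (fun ω => cu ω * Du ω ^ 2 - 2 * (Ds ω * (cu ω * Du ω))) μ :=
            hcuDu2.sub hcross_int
          rw [integral_add hdiff hDs2cu, integral_sub hcuDu2 hcross_int,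
            integral_const_mul]
  linarith

end Probability

section Energy

variable {Ω : Type*} {mΩ : MeasurableSpace Ω} {μ : Measure Ω} [IsFiniteMeasure μ]
  {F : ℝ → MeasurableSpace Ω} {T t : ℝ} {c D : ℝ → Ω → ℝ}

lemma integral_mul_sq_le_integral_quadVarSum (hF_le : ∀ s ∈ Icc 0 T, F s ≤ mΩ)
    (hc : ∀ s ∈ Icc 0 T, MemLp (c s) ∞ μ) (hc_le : ∀ s ∈ Icc 0 T, ∀ ω, c s ω ≤ 1)
    (hD_adapted : ∀ s ∈ Icc 0 T, StronglyMeasurable[F s] (D s))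
    (hD : ∀ s ∈ Icc 0 T, MemLp (D s) ∞ μ) (hD_zero : ∀ ω, D 0 ω = 0)
    (hcD : MartingaleOn F μ (fun s ω => c s ω * D s ω) T)
    (hc_sub : ∀ s u, 0 ≤ s → s ≤ u → u ≤ T → c s ≤ᵐ[μ] μ[c u | F s])
    (ht : t ∈ Icc 0 T) {n : ℕ} (hn : n ≠ 0) :
    ∫ ω, c t ω * D t ω ^ 2 ∂μ ≤ ∫ ω, quadVarSum (fun s => D s ω) t n ∂μ := by
  set p := gridPoint t n
  have hp : ∀ k ≤ n, p k ∈ Icc 0 T := fun k hk =>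
    Icc_subset_Icc_right ht.2 (gridPoint_mem_Icc ht.1 hk)
  set E : ℝ → ℝ := fun s => ∫ ω, c s ω * D s ω ^ 2 ∂μ
  have hstep : ∀ k ∈ Finset.range n,
      E (p (k + 1)) - E (p k) ≤ ∫ ω, (D (p (k + 1)) ω - D (p k) ω) ^ 2 ∂μ := by
    intro k hk
    have hk := Finset.mem_range.1 hk
    have hpk := hp k hk.le
    have hpk1 := hp (k + 1) hk
    have hpp := monotone_gridPoint (n := n) ht.1 k.le_succ
    have := integral_mul_sq_le_add_integral_sq_sub (hF_le _ hpk) (hD_adapted _ hpk) (hc _ hpk)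
      (hc _ hpk1) (hD _ hpk) (hD _ hpk1) (ae_of_all _ (hc_le _ hpk1))
      (hcD.2 _ _ hpk.1 hpp hpk1.2) (hc_sub _ _ hpk.1 hpp hpk1.2)
    simp only [E]
    linarith
  have hsq_int : ∀ k ∈ Finset.range n,
      Integrable (fun ω => (D (p (k + 1)) ω - D (p k) ω) ^ 2) μ := fun k hk =>
    integrable_sq_sub (hD _ (hp _ (Finset.mem_range.1 hk))) (hD _ (hp _ (Finset.mem_range.1 hk).le))
  calc E t = E (p n) - E (p 0) := by simp [E, p, gridPoint_self hn, hD_zero]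
    _ = ∑ k ∈ Finset.range n, (E (p (k + 1)) - E (p k)) := (Finset.sum_range_sub (E ∘ p) n).symm
    _ ≤ ∑ k ∈ Finset.range n, ∫ ω, (D (p (k + 1)) ω - D (p k) ω) ^ 2 ∂μ :=
        Finset.sum_le_sum hstep
    _ = ∫ ω, quadVarSum (fun s => D s ω) t n ∂μ := (integral_finsetSum _ hsq_int).symm

lemma ae_eq_zero_of_gridVariation_le {V : ℝ} (hF_le : ∀ s ∈ Icc 0 T, F s ≤ mΩ)
    (hc : ∀ s ∈ Icc 0 T, MemLp (c s) ∞ μ) (hc_le : ∀ s ∈ Icc 0 T, ∀ ω, c s ω ≤ 1)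
    (hD_adapted : ∀ s ∈ Icc 0 T, StronglyMeasurable[F s] (D s))
    (hD : ∀ s ∈ Icc 0 T, MemLp (D s) ∞ μ) (hD_zero : ∀ ω, D 0 ω = 0)
    (hcD : MartingaleOn F μ (fun s ω => c s ω * D s ω) T)
    (hc_sub : ∀ s u, 0 ≤ s → s ≤ u → u ≤ T → c s ≤ᵐ[μ] μ[c u | F s])
    (ht : t ∈ Icc 0 T) (hc_pos : ∀ ω, 0 < c t ω)
    (hD_cont : ∀ ω, ContinuousOn (fun s => D s ω) (Icc 0 t))
    (hD_var : ∀ ω n, gridVariation (fun s => D s ω) t n ≤ V) :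
    D t =ᵐ[μ] 0 := by
  have hp : ∀ n k, k ≤ n → gridPoint t n k ∈ Icc 0 T := fun n k hk =>
    Icc_subset_Icc_right ht.2 (gridPoint_mem_Icc ht.1 hk)
  have hQV_int : ∀ n, Integrable (fun ω => quadVarSum (fun s => D s ω) t n) μ := fun n =>
    integrable_finsetSum _ fun k hk => integrable_sq_sub
      (hD _ (hp n _ (Finset.mem_range.1 hk))) (hD _ (hp n _ (Finset.mem_range.1 hk).le))
  have hQV_lim : Tendsto (fun n => ∫ ω, quadVarSum (fun s => D s ω) t n ∂μ) atTop (𝓝 0) := by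
    simpa using tendsto_integral_of_dominated_convergence (fun _ => V ^ 2)
      (fun n => (hQV_int n).aestronglyMeasurable) (integrable_const _)
      (fun n => ae_of_all _ fun ω => by
        rw [Real.norm_eq_abs, abs_of_nonneg quadVarSum_nonneg]
        exact quadVarSum_le_sq_of_gridVariation_le (hD_var ω n))
      (ae_of_all _ fun ω => tendsto_quadVarSum_of_continuousOn ht.1 (hD_cont ω) (hD_var ω))
  have hnonneg : 0 ≤ fun ω => c t ω * D t ω ^ 2 := fun ω => mul_nonneg (hc_pos ω).le (sq_nonneg _)
  have hle : ∫ ω, c t ω * D t ω ^ 2 ∂μ ≤ 0 :=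
    ge_of_tendsto hQV_lim ((eventually_ne_atTop 0).mono fun n hn =>
      integral_mul_sq_le_integral_quadVarSum hF_le hc hc_le hD_adapted hD hD_zero hcD hc_sub ht hn)
  have hzero : (fun ω => c t ω * D t ω ^ 2) =ᵐ[μ] 0 :=
    (integral_eq_zero_iff_of_nonneg hnonneg
      (((memLp_top_sq (hD t ht)).mul (hc t ht)).integrable le_top)).1
      (le_antisymm hle (integral_nonneg hnonneg))
  filter_upwards [hzero] with ω h
  simpa [(hc_pos ω).ne'] using h

end Energy

section Martingale

variable {Ω : Type*} [mΩ : MeasurableSpace Ω] {F : ℝ → MeasurableSpace Ω} {μ : Measure Ω}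
  {T : ℝ}

lemma MartingaleOn.sub {X Y : ℝ → Ω → ℝ} (hX : MartingaleOn F μ X T)
    (hY : MartingaleOn F μ Y T) : MartingaleOn F μ (X - Y) T := by
  refine ⟨fun t ht => ⟨(hX.1 t ht).1.sub (hY.1 t ht).1, (hX.1 t ht).2.sub (hY.1 t ht).2⟩,
    fun s t hs hst htT => ?_⟩
  have ht : t ∈ Icc 0 T := ⟨hs.trans hst, htT⟩
  exact (condExp_sub (hX.1 t ht).2 (hY.1 t ht).2 _).trans
    ((hX.2 s t hs hst htT).sub (hY.2 s t hs hst htT))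

lemma MartingaleOn.ae_le_condExp_of_antitoneOn [IsFiniteMeasure μ] {c G : ℝ → Ω → ℝ}
    (hM : MartingaleOn F μ (fun t ω => c t ω * G t ω) T)
    (hc : ∀ t ∈ Icc 0 T, MemLp (c t) ∞ μ) (hc_nonneg : ∀ t ∈ Icc 0 T, ∀ ω, 0 ≤ c t ω)
    (hG_adapted : ∀ t ∈ Icc 0 T, StronglyMeasurable[F t] (G t))
    (hG : ∀ t ∈ Icc 0 T, MemLp (G t) ∞ μ) (hG_pos : ∀ t ∈ Icc 0 T, ∀ ω, 0 < G t ω)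
    (hG_anti : ∀ ω, AntitoneOn (fun t => G t ω) (Icc 0 T)) {s u : ℝ} (hs : 0 ≤ s)
    (hsu : s ≤ u) (huT : u ≤ T) : c s ≤ᵐ[μ] μ[c u | F s] := by
  have hs' : s ∈ Icc 0 T := ⟨hs, hsu.trans huT⟩
  have hu' : u ∈ Icc 0 T := ⟨hs.trans hsu, huT⟩
  exact ae_le_condExp_of_condExp_mul_eq (hG_adapted s hs') (hG_pos s hs')
    (hc_nonneg u hu') (fun ω => hG_anti ω hs' hu' hsu) (hM.1 u hu').2
    (((hc u hu').mul (hG s hs')).integrable le_top) ((hc u hu').integrable le_top)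
    (hM.2 s u hs hsu huT)

lemma ae_eq_of_martingaleOn_mul_antitoneOn [IsFiniteMeasure μ] {c G₁ G₂ : ℝ → Ω → ℝ} {t : ℝ}
    (hF_le : ∀ t ∈ Icc 0 T, F t ≤ mΩ) (hc_adapted : ∀ t ∈ Icc 0 T, Measurable[F t] (c t))
    (hc_mem : ∀ t ∈ Icc 0 T, ∀ ω, c t ω ∈ Ioc 0 1)
    (hG₁_adapted : ∀ t ∈ Icc 0 T, Measurable[F t] (G₁ t))
    (hG₂_adapted : ∀ t ∈ Icc 0 T, Measurable[F t] (G₂ t))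
    (hG₁_pos : ∀ t ∈ Icc 0 T, ∀ ω, 0 < G₁ t ω) (hG₂_pos : ∀ t ∈ Icc 0 T, ∀ ω, 0 < G₂ t ω)
    (hG₁_anti : ∀ ω, AntitoneOn (fun t => G₁ t ω) (Icc 0 T))
    (hG₂_anti : ∀ ω, AntitoneOn (fun t => G₂ t ω) (Icc 0 T))
    (hG₁_cont : ∀ ω, ContinuousOn (fun t => G₁ t ω) (Icc 0 T))
    (hG₂_cont : ∀ ω, ContinuousOn (fun t => G₂ t ω) (Icc 0 T))
    (hG₁_one : ∀ ω, G₁ 0 ω = 1) (hG₂_one : ∀ ω, G₂ 0 ω = 1)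
    (hM₁ : MartingaleOn F μ (fun t ω => c t ω * G₁ t ω) T)
    (hM₂ : MartingaleOn F μ (fun t ω => c t ω * G₂ t ω) T) (ht : t ∈ Icc 0 T) :
    G₁ t =ᵐ[μ] G₂ t := by
  have hG₁_le : ∀ s ∈ Icc 0 T, ∀ ω, G₁ s ω ≤ 1 := fun s hs ω =>
    hG₁_one ω ▸ hG₁_anti ω ⟨le_rfl, hs.1.trans hs.2⟩ hs hs.1
  have hG₂_le : ∀ s ∈ Icc 0 T, ∀ ω, G₂ s ω ≤ 1 := fun s hs ω =>
    hG₂_one ω ▸ hG₂_anti ω ⟨le_rfl, hs.1.trans hs.2⟩ hs hs.1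
  have memLp : ∀ X : ℝ → Ω → ℝ, (∀ s ∈ Icc 0 T, Measurable[F s] (X s)) →
      (∀ s ∈ Icc 0 T, ∀ ω, |X s ω| ≤ 1) → ∀ s ∈ Icc 0 T, MemLp (X s) ∞ μ :=
    fun X hX hX_le s hs => memLp_top_of_bound
      ((hX s hs).mono (hF_le s hs) le_rfl).aestronglyMeasurable 1 (ae_of_all _ (hX_le s hs))
  have hc := memLp c hc_adapted fun s hs ω =>
    abs_le.2 ⟨by linarith [(hc_mem s hs ω).1], (hc_mem s hs ω).2⟩
  have hG₁ := memLp G₁ hG₁_adapted fun s hs ω =>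
    abs_le.2 ⟨by linarith [hG₁_pos s hs ω], hG₁_le s hs ω⟩
  have hD := memLp (G₁ - G₂) (fun s hs => (hG₁_adapted s hs).sub (hG₂_adapted s hs))
    fun s hs ω => abs_sub_le_of_nonneg_of_le (hG₁_pos s hs ω).le (hG₁_le s hs ω)
      (hG₂_pos s hs ω).le (hG₂_le s hs ω)
  have hcD : MartingaleOn F μ (fun s ω => c s ω * (G₁ - G₂) s ω) T := by
    convert hM₁.sub hM₂ using 1
    ext s ω
    simp [mul_sub]
  have hc_sub : ∀ s u, 0 ≤ s → s ≤ u → u ≤ T → c s ≤ᵐ[μ] μ[c u | F s] := fun s u =>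
    hM₁.ae_le_condExp_of_antitoneOn hc (fun s hs ω => (hc_mem s hs ω).1.le)
      (fun s hs => (hG₁_adapted s hs).stronglyMeasurable) hG₁ hG₁_pos hG₁_anti
  have hIcc : Icc 0 t ⊆ Icc 0 T := Icc_subset_Icc_right ht.2
  have hvar : ∀ ω n, gridVariation (fun s => (G₁ - G₂) s ω) t n ≤ 2 := fun ω n =>
    (gridVariation_sub_le_of_antitoneOn ht.1 ((hG₁_anti ω).mono hIcc) ((hG₂_anti ω).mono hIcc)
      n).trans (by linarith [hG₁_pos t ht ω, hG₂_pos t ht ω, hG₁_one ω, hG₂_one ω])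
  filter_upwards [ae_eq_zero_of_gridVariation_le hF_le hc (fun s hs ω => (hc_mem s hs ω).2)
    (fun s hs => ((hG₁_adapted s hs).sub (hG₂_adapted s hs)).stronglyMeasurable) hD
    (fun ω => by simp [hG₁_one, hG₂_one]) hcD hc_sub ht (fun ω => (hc_mem t ht ω).1)
    (fun ω => ((hG₁_cont ω).sub (hG₂_cont ω)).mono hIcc) hvar] with ω h
  exact sub_eq_zero.1 h

end Martingale

theorem stmt19_general {Ω : Type*} [mΩ : MeasurableSpace Ω] (Q : Measure Ω)
    [IsProbabilityMeasure Q] (T : ℝ)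
    (F : ℝ → MeasurableSpace Ω)
    (hF_le : ∀ t ∈ Set.Icc (0 : ℝ) T, F t ≤ mΩ)
    (c : ℝ → Ω → ℝ)
    (hc_adapted : ∀ t ∈ Set.Icc (0 : ℝ) T, Measurable[F t] (c t))
    (hc_mem : ∀ t : ℝ, 0 ≤ t → t < T → ∀ ω, c t ω ∈ Set.Ioo (0 : ℝ) 1)
    (hc_T : ∀ ω, c T ω = 1)
    (G₁ G₂ : ℝ → Ω → ℝ)
    (hG₁_adapted : ∀ t ∈ Set.Icc (0 : ℝ) T, Measurable[F t] (G₁ t))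
    (hG₂_adapted : ∀ t ∈ Set.Icc (0 : ℝ) T, Measurable[F t] (G₂ t))
    (hG₁_pos : ∀ t ∈ Set.Icc (0 : ℝ) T, ∀ ω, 0 < G₁ t ω)
    (hG₂_pos : ∀ t ∈ Set.Icc (0 : ℝ) T, ∀ ω, 0 < G₂ t ω)
    (hG₁_anti : ∀ ω, AntitoneOn (fun t => G₁ t ω) (Set.Icc (0 : ℝ) T))
    (hG₂_anti : ∀ ω, AntitoneOn (fun t => G₂ t ω) (Set.Icc (0 : ℝ) T))
    (hG₁_cont : ∀ ω, ContinuousOn (fun t => G₁ t ω) (Set.Icc (0 : ℝ) T))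
    (hG₂_cont : ∀ ω, ContinuousOn (fun t => G₂ t ω) (Set.Icc (0 : ℝ) T))
    (hG₁_one : ∀ ω, G₁ 0 ω = 1) (hG₂_one : ∀ ω, G₂ 0 ω = 1)
    (hM₁ : MartingaleOn F Q (fun t ω => c t ω * G₁ t ω) T)
    (hM₂ : MartingaleOn F Q (fun t ω => c t ω * G₂ t ω) T) :
    ∀ᵐ ω ∂Q, ∀ t ∈ Set.Icc (0 : ℝ) T, G₁ t ω = G₂ t ω := by
  have hc_mem' : ∀ t ∈ Icc 0 T, ∀ ω, c t ω ∈ Ioc 0 1 := fun t ht ω => by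
    rcases ht.2.eq_or_lt with rfl | h
    · simp [hc_T]
    · exact Ioo_subset_Ioc_self (hc_mem t ht.1 h ω)
  exact ae_forall_eq_of_continuousOn hG₁_cont hG₂_cont fun t ht =>
    ae_eq_of_martingaleOn_mul_antitoneOn hF_le hc_adapted hc_mem' hG₁_adapted hG₂_adapted hG₁_pos
      hG₂_pos hG₁_anti hG₂_anti hG₁_cont hG₂_cont hG₁_one hG₂_one hM₁ hM₂ ht

/-- Let `(Ω, Σ, Q)` be a probability space with a filtration
`(F_t)_{t∈[0,T]}`, `T > 0`, satisfying the usual conditions (right-continuous and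
complete).  Let `c = (c(t))_{t∈[0,T]}` be an `(F_t)`-adapted process with continuous
paths such that `c(t) ∈ (0,1)` for all `t ∈ [0,T)` and `c(T) = 1`.  If `G₁` and `G₂`
are two strictly positive `(F_t)`-adapted processes on `[0,T]`, each with all paths
non-increasing and continuous, with `G₁(0) = G₂(0) = 1`, and such that both
`(c(t)G₁(t))_{t∈[0,T]}` and `(c(t)G₂(t))_{t∈[0,T]}` are `(F_t)`-martingales under `Q`,
then `G₁` and `G₂` are indistinguishable: `Q`-almost surely `G₁(t) = G₂(t)` for all
`t ∈ [0,T]`. -/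
theorem stmt19 {Ω : Type*} [mΩ : MeasurableSpace Ω] (Q : Measure Ω)
    [IsProbabilityMeasure Q] (T : ℝ) (hT : 0 < T)
    (F : ℝ → MeasurableSpace Ω)
    (hF_mono : ∀ s t : ℝ, 0 ≤ s → s ≤ t → t ≤ T → F s ≤ F t)
    (hF_le : ∀ t ∈ Set.Icc (0 : ℝ) T, F t ≤ mΩ)
    (hF_rightCont : ∀ t : ℝ, 0 ≤ t → t < T → F t = ⨅ u ∈ Set.Ioc t T, F u)
    (hF_complete : ∀ t ∈ Set.Icc (0 : ℝ) T, ∀ A : Set Ω,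
      MeasurableSet[mΩ] A → Q A = 0 → MeasurableSet[F t] A)
    (c : ℝ → Ω → ℝ)
    (hc_adapted : ∀ t ∈ Set.Icc (0 : ℝ) T, Measurable[F t] (c t))
    (hc_cont : ∀ ω, ContinuousOn (fun t => c t ω) (Set.Icc (0 : ℝ) T))
    (hc_mem : ∀ t : ℝ, 0 ≤ t → t < T → ∀ ω, c t ω ∈ Set.Ioo (0 : ℝ) 1)
    (hc_T : ∀ ω, c T ω = 1)
    (G₁ G₂ : ℝ → Ω → ℝ)
    (hG₁_adapted : ∀ t ∈ Set.Icc (0 : ℝ) T, Measurable[F t] (G₁ t))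
    (hG₂_adapted : ∀ t ∈ Set.Icc (0 : ℝ) T, Measurable[F t] (G₂ t))
    (hG₁_pos : ∀ t ∈ Set.Icc (0 : ℝ) T, ∀ ω, 0 < G₁ t ω)
    (hG₂_pos : ∀ t ∈ Set.Icc (0 : ℝ) T, ∀ ω, 0 < G₂ t ω)
    (hG₁_anti : ∀ ω, AntitoneOn (fun t => G₁ t ω) (Set.Icc (0 : ℝ) T))
    (hG₂_anti : ∀ ω, AntitoneOn (fun t => G₂ t ω) (Set.Icc (0 : ℝ) T))
    (hG₁_cont : ∀ ω, ContinuousOn (fun t => G₁ t ω) (Set.Icc (0 : ℝ) T))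
    (hG₂_cont : ∀ ω, ContinuousOn (fun t => G₂ t ω) (Set.Icc (0 : ℝ) T))
    (hG₁_one : ∀ ω, G₁ 0 ω = 1) (hG₂_one : ∀ ω, G₂ 0 ω = 1)
    (hM₁ : MartingaleOn F Q (fun t ω => c t ω * G₁ t ω) T)
    (hM₂ : MartingaleOn F Q (fun t ω => c t ω * G₂ t ω) T) :
    ∀ᵐ ω ∂Q, ∀ t ∈ Set.Icc (0 : ℝ) T, G₁ t ω = G₂ t ω :=
  stmt19_general (mΩ := mΩ) Q T F hF_le c hc_adapted hc_mem hc_T G₁ G₂ hG₁_adapted hG₂_adapted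
    hG₁_pos hG₂_pos hG₁_anti hG₂_anti hG₁_cont hG₂_cont hG₁_one hG₂_one hM₁ hM₂
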